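/- arXiv:1602.08273 — 7 statements merged into one kernel-verified Lean document; each statement's English description precedes it below -/
import Mathlib

section
/- Let S be any Finpartition of (Finset.univ : Finset ι) that extends Q, with every part of S of cardinality at most D, and let i ∈ P. Let ρ̌ be the maximum of ρ(E) over all Finsets E with Q(i) ⊆ E ⊆ Q(i) ∪ (Finset.univ \ P) and |E| ≤ D (a finite nonempty family since |Q(i)| ≤ D). Let v : ℕ → ℝ → ℝ be such that (fun n => v n ρ̌) is unimodal with peak B*, where 1 ≤ B* ≤ D, and such that for every n the function v n : ℝ → ℝ is monotone (nondecreasing). Define B̌ = |Q(i)| if |Q(i)| ≥ B*, and B̌ = min(|Q(i)| + |Finset.univ \ P|, B*) otherwise. Then v (|S(i)|) (ρ(S(i))) ≤ v B̌ ρ̌. -/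
open Finset

variable {ι : Type*}

/-- Long-term SINR of the considered mobile station when served by the cluster `E`:
`ρ(E) = c / (σ² + ∑_{j ∈ univ \ E} w j)`. -/
noncomputable def rho [Fintype ι] [DecidableEq ι] (c σ2 : ℝ) (w : ι → ℝ) (E : Finset ι) : ℝ :=
  c / (σ2 + ∑ j ∈ Finset.univ \ E, w j)

/-- The full clustering `S` extends the partial clustering `Q` of `P`:
the trace of `S` on `P` is exactly `Q`. -/
def ExtendsPartial [Fintype ι] [DecidableEq ι] (P : Finset ι) (Q : Finpartition P)
    (S : Finpartition (Finset.univ : Finset ι)) : Prop :=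
  (S.parts.image (· ∩ P)).filter (· ≠ ∅) = Q.parts

/-- `u : ℕ → ℝ` is unimodal with peak `B`. -/
def UnimodalPeak (u : ℕ → ℝ) (B : ℕ) : Prop :=
  (∀ m n : ℕ, m ≤ n → n ≤ B → u m ≤ u n) ∧ (∀ m n : ℕ, B ≤ m → m ≤ n → u n ≤ u m)

theorem throughput_bound_constrained [Fintype ι] [DecidableEq ι]
    (i : ι) (c σ2 : ℝ) (hc : 0 < c) (hσ : 0 < σ2) (w : ι → ℝ) (hw : ∀ j, 0 ≤ w j)
    (P : Finset ι) (Q : Finpartition P) (D : ℕ)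
    (hQD : ∀ A ∈ Q.parts, A.card ≤ D)
    (S : Finpartition (Finset.univ : Finset ι))
    (hSQ : ExtendsPartial P Q S)
    (hSD : ∀ A ∈ S.parts, A.card ≤ D)
    (hiP : i ∈ P)
    (Qi : Finset ι) (hQi : Qi ∈ Q.parts) (hiQi : i ∈ Qi)
    (rhoCheck : ℝ)
    (hrhoCheck : IsGreatest {x : ℝ | ∃ E : Finset ι,
        Qi ⊆ E ∧ E ⊆ Qi ∪ (Finset.univ \ P) ∧ E.card ≤ D ∧ x = rho c σ2 w E} rhoCheck)
    (v : ℕ → ℝ → ℝ) (Bstar : ℕ) (hB1 : 1 ≤ Bstar) (hBD : Bstar ≤ D)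
    (huni : UnimodalPeak (fun n => v n rhoCheck) Bstar)
    (hmono : ∀ n, Monotone (v n))
    (Bcheck : ℕ)
    (hBcheck : Bcheck = if Bstar ≤ Qi.card then Qi.card
          else min (Qi.card + (Finset.univ \ P).card) Bstar) :
    ∀ A ∈ S.parts, i ∈ A → v A.card (rho c σ2 w A) ≤ v Bcheck rhoCheck := by
  intro A hA hiA
  have hAP : A ∩ P = Qi := by
    have hmem : A ∩ P ∈ Q.parts := by
      rw [← hSQ]
      simp only [mem_filter, mem_image]
      exact ⟨⟨A, hA, rfl⟩, ne_empty_of_mem (mem_inter.mpr ⟨hiA, hiP⟩)⟩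
    exact Q.eq_of_mem_parts hmem hQi (mem_inter.mpr ⟨hiA, hiP⟩) hiQi
  have hQiA : Qi ⊆ A := hAP ▸ inter_subset_left
  have hAsub : A ⊆ Qi ∪ (Finset.univ \ P) := by
    intro x hx
    by_cases hxP : x ∈ P
    · exact mem_union_left _ (hAP ▸ mem_inter.mpr ⟨hx, hxP⟩)
    · exact mem_union_right _ (mem_sdiff.mpr ⟨mem_univ x, hxP⟩)
  have hcardA : A.card ≤ D := hSD A hA
  have hρ : rho c σ2 w A ≤ rhoCheck :=
    hrhoCheck.2 ⟨A, hQiA, hAsub, hcardA, rfl⟩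
  have h1 : v A.card (rho c σ2 w A) ≤ v A.card rhoCheck := hmono _ hρ
  have hQiCard : Qi.card ≤ A.card := card_le_card hQiA
  have hAle : A.card ≤ Qi.card + (Finset.univ \ P).card :=
    (card_le_card hAsub).trans (card_union_le _ _)
  have h2 : v A.card rhoCheck ≤ v Bcheck rhoCheck := by
    rcases le_or_gt Bstar Qi.card with h | h
    · rw [hBcheck, if_pos h]
      exact huni.2 Qi.card A.card h hQiCard
    · rw [hBcheck, if_neg (not_le.mpr h)]
      rcases le_or_gt A.card (min (Qi.card + (Finset.univ \ P).card) Bstar) with h' | h'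
      · exact huni.1 _ _ h' (min_le_right _ _)
      · have heq : min (Qi.card + (Finset.univ \ P).card) Bstar = Bstar := by omega
        rw [heq]
        exact huni.2 _ _ le_rfl (by omega)
  exact h1.trans h2
end

section
/- Let S be any Finpartition of (Finset.univ : Finset ι) that extends Q, with every part of S of cardinality at most D, and let i ∉ P. Let F = (the union of those parts of Q of cardinality strictly less than D) ∪ (Finset.univ \ P) (so i ∈ F). Let ρ̌ be the maximum of ρ(E) over all Finsets E with E ⊆ F and |E| ≤ D. Let v : ℕ → ℝ → ℝ be such that (fun n => v n ρ̌) is unimodal with peak B*, where 1 ≤ B* ≤ D, and such that for every n the function v n : ℝ → ℝ is monotone (nondecreasing). Define B̌ = min(|F|, B*). Then v (|S(i)|) (ρ(S(i))) ≤ v B̌ ρ̌. -/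
open Finset

variable {ι : Type*}

theorem throughput_bound_unconstrained [Fintype ι] [DecidableEq ι]
    (i : ι) (c σ2 : ℝ) (hc : 0 < c) (hσ : 0 < σ2) (w : ι → ℝ) (hw : ∀ j, 0 ≤ w j)
    (P : Finset ι) (Q : Finpartition P) (D : ℕ)
    (hQD : ∀ A ∈ Q.parts, A.card ≤ D)
    (S : Finpartition (Finset.univ : Finset ι))
    (hSQ : ExtendsPartial P Q S)
    (hSD : ∀ A ∈ S.parts, A.card ≤ D)
    (hiP : i ∉ P)
    (F : Finset ι)
    (hF : F = (Q.parts.filter fun A => A.card < D).biUnion id ∪ (Finset.univ \ P))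
    (rhoCheck : ℝ)
    (hrhoCheck : IsGreatest {x : ℝ | ∃ E : Finset ι,
        E ⊆ F ∧ E.card ≤ D ∧ x = rho c σ2 w E} rhoCheck)
    (v : ℕ → ℝ → ℝ) (Bstar : ℕ) (hB1 : 1 ≤ Bstar) (hBD : Bstar ≤ D)
    (huni : UnimodalPeak (fun n => v n rhoCheck) Bstar)
    (hmono : ∀ n, Monotone (v n))
    (Bcheck : ℕ) (hBcheck : Bcheck = min F.card Bstar) :
    ∀ A ∈ S.parts, i ∈ A → v A.card (rho c σ2 w A) ≤ v Bcheck rhoCheck := by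
  intro A hA hiA
  have hAD : A.card ≤ D := hSD A hA
  have hAF : A ⊆ F := by
    intro j hj
    rw [hF]
    by_cases hjP : j ∈ P
    · apply Finset.mem_union_left
      rw [Finset.mem_biUnion]
      refine ⟨A ∩ P, ?_, Finset.mem_inter.2 ⟨hj, hjP⟩⟩
      rw [Finset.mem_filter]
      constructor
      · rw [← hSQ, Finset.mem_filter]
        exact ⟨Finset.mem_image_of_mem _ hA,
          Finset.nonempty_iff_ne_empty.1 ⟨j, Finset.mem_inter.2 ⟨hj, hjP⟩⟩⟩
      · have hss : A ∩ P ⊂ A := by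
          refine (Finset.ssubset_iff_of_subset Finset.inter_subset_left).2 ⟨i, hiA, ?_⟩
          simp [hiP]
        exact lt_of_lt_of_le (Finset.card_lt_card hss) hAD
    · exact Finset.mem_union_right _ (by simp [hjP])
  have hρ : rho c σ2 w A ≤ rhoCheck := hrhoCheck.2 ⟨A, hAF, hAD, rfl⟩
  refine (hmono A.card hρ).trans ?_
  have hAcard : A.card ≤ F.card := Finset.card_le_card hAF
  rcases le_or_gt A.card Bcheck with h | h
  · exact huni.1 A.card Bcheck h (hBcheck ▸ min_le_right _ _)
  · have hBs : Bstar ≤ Bcheck := by omega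
    exact huni.2 Bcheck A.card hBs h.le
end

section
/- If S is a Finpartition of (Finset.univ : Finset ι) extending Q in which every part has cardinality at most D, and i ∉ P, then the part S(i) containing i is contained in F = (the union of those parts of Q of cardinality strictly less than D) ∪ (Finset.univ \ P). -/
open Finset

variable {ι : Type*}

theorem part_subset_F_of_unconstrained [Fintype ι] [DecidableEq ι]
    (P : Finset ι) (Q : Finpartition P) (D : ℕ)
    (hQD : ∀ A ∈ Q.parts, A.card ≤ D)
    (S : Finpartition (Finset.univ : Finset ι))
    (hSQ : ExtendsPartial P Q S)
    (hSD : ∀ A ∈ S.parts, A.card ≤ D)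
    (i : ι) (hiP : i ∉ P)
    (F : Finset ι)
    (hF : F = (Q.parts.filter fun A => A.card < D).biUnion id ∪ (Finset.univ \ P)) :
    ∀ A ∈ S.parts, i ∈ A → A ⊆ F := by
  intro A hA hiA j hjA
  subst hF
  by_cases hjP : j ∈ P
  · apply Finset.mem_union_left
    have hAP : A ∩ P ∈ Q.parts := by
      rw [← hSQ]
      refine Finset.mem_filter.2 ⟨Finset.mem_image_of_mem _ hA, ?_⟩
      exact Finset.ne_empty_of_mem (Finset.mem_inter.2 ⟨hjA, hjP⟩)
    have hlt : (A ∩ P).card < D := by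
      have h1 : (A ∩ P).card < A.card := by
        apply Finset.card_lt_card
        constructor
        · exact Finset.inter_subset_left
        · intro hsub
          exact hiP (Finset.mem_inter.1 (hsub hiA)).2
      exact lt_of_lt_of_le h1 (hSD A hA)
    exact Finset.mem_biUnion.2 ⟨A ∩ P, Finset.mem_filter.2 ⟨hAP, hlt⟩,
      Finset.mem_inter.2 ⟨hjA, hjP⟩⟩
  · exact Finset.mem_union_right _ (Finset.mem_sdiff.2 ⟨Finset.mem_univ j, hjP⟩)
end

section
/- If S is a Finpartition of (Finset.univ : Finset ι) extending Q in which every part has cardinality at most D, and i ∈ P, then Q(i) ⊆ S(i) ⊆ Q(i) ∪ (Finset.univ \ P), and consequently ρ(S(i)) ≤ ρ̌, where ρ̌ is the maximum of ρ(E) over all Finsets E with Q(i) ⊆ E ⊆ Q(i) ∪ (Finset.univ \ P) and |E| ≤ D. -/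
open Finset

variable {ι : Type*}

theorem part_sandwich_and_sinr_bound_of_constrained [Fintype ι] [DecidableEq ι]
    (i : ι) (c σ2 : ℝ) (hc : 0 < c) (hσ : 0 < σ2) (w : ι → ℝ) (hw : ∀ j, 0 ≤ w j)
    (P : Finset ι) (Q : Finpartition P) (D : ℕ)
    (hQD : ∀ A ∈ Q.parts, A.card ≤ D)
    (S : Finpartition (Finset.univ : Finset ι))
    (hSQ : ExtendsPartial P Q S)
    (hSD : ∀ A ∈ S.parts, A.card ≤ D)
    (hiP : i ∈ P)
    (Qi : Finset ι) (hQi : Qi ∈ Q.parts) (hiQi : i ∈ Qi)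
    (rhoCheck : ℝ)
    (hrhoCheck : IsGreatest {x : ℝ | ∃ E : Finset ι,
        Qi ⊆ E ∧ E ⊆ Qi ∪ (Finset.univ \ P) ∧ E.card ≤ D ∧ x = rho c σ2 w E} rhoCheck) :
    ∀ A ∈ S.parts, i ∈ A →
      Qi ⊆ A ∧ A ⊆ Qi ∪ (Finset.univ \ P) ∧ rho c σ2 w A ≤ rhoCheck := by
  intro A hA hiA
  have hAP : A ∩ P ∈ Q.parts := by
    rw [← hSQ]
    simp only [Finset.mem_filter, Finset.mem_image]
    exact ⟨⟨A, hA, rfl⟩, Finset.ne_empty_of_mem (Finset.mem_inter.mpr ⟨hiA, hiP⟩)⟩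
  have heq : A ∩ P = Qi :=
    Q.eq_of_mem_parts hAP hQi (Finset.mem_inter.mpr ⟨hiA, hiP⟩) hiQi
  have h1 : Qi ⊆ A := heq ▸ Finset.inter_subset_left
  have h2 : A ⊆ Qi ∪ (Finset.univ \ P) := by
    intro x hx
    by_cases hxP : x ∈ P
    · exact Finset.mem_union_left _ (heq ▸ Finset.mem_inter.mpr ⟨hx, hxP⟩)
    · exact Finset.mem_union_right _ (by simp [hxP])
  exact ⟨h1, h2, hrhoCheck.2 ⟨A, h1, h2, hSD A hA, rfl⟩⟩
end

section
/- The set function ρ is supermodular (has increasing returns): for all Finsets A ⊆ B of ι and every x : ι with x ∉ B, ρ(A ∪ {x}) − ρ(A) ≤ ρ(B ∪ {x}) − ρ(B). Equivalently, for all Finsets A, B of ι, ρ(A) + ρ(B) ≤ ρ(A ∪ B) + ρ(A ∩ B). -/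
open Finset

variable {ι : Type*}

/-!
The denominator `D(E) = σ² + ∑_{j ∉ E} w j` is modular, `D(A ∪ B) + D(A ∩ B) = D(A) + D(B)`, and
antitone, so `D(A ∪ B) ≤ D(A), D(B) ≤ D(A ∩ B)` with equal sums. Since `t ↦ c / t` is convex on
`(0, ∞)`, its values at the two inner points of such a pair are dominated by its values at the
two outer points; this is the lattice form of supermodularity. The increasing-returns form is the
lattice form applied to `A ∪ {x}` and `B`.
-/

theorem ConvexOn.add_le_add_of_add_eq {𝕜 : Type*} [Field 𝕜] [LinearOrder 𝕜]
    [IsStrictOrderedRing 𝕜] {s : Set 𝕜} {f : 𝕜 → 𝕜} (hf : ConvexOn 𝕜 s f) {a b u v : 𝕜}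
    (hu : u ∈ s) (hv : v ∈ s) (hua : u ≤ a) (hub : u ≤ b) (hsum : a + b = u + v) :
    f a + f b ≤ f u + f v := by
  rcases (show u ≤ v by linarith).eq_or_lt with rfl | huv
  · obtain rfl : a = u := by linarith
    obtain rfl : b = a := by linarith
    rfl
  -- `a` and `b` are the convex combinations of `u, v` with weights `(t, 1 - t)` and `(1 - t, t)`.
  set t := (v - a) / (v - u)
  have ht : 0 ≤ t := div_nonneg (by linarith) (by linarith)
  have ht' : 0 ≤ 1 - t := sub_nonneg.2 ((div_le_one (by linarith)).2 (by linarith))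
  have htvu : t * (v - u) = v - a := div_mul_cancel₀ _ (sub_ne_zero.2 huv.ne')
  have ha : t • u + (1 - t) • v = a := by
    simp only [smul_eq_mul]; linear_combination -htvu
  have hb : (1 - t) • u + t • v = b := by
    simp only [smul_eq_mul]; linear_combination htvu - hsum
  have hfa := hf.2 hu hv ht ht' (by ring)
  have hfb := hf.2 hu hv ht' ht (by ring)
  rw [ha] at hfa
  rw [hb] at hfb
  simp only [smul_eq_mul] at hfa hfb
  linarith

theorem ConvexOn.add_le_add_comp_sup_inf {𝕜 α : Type*} [Field 𝕜] [LinearOrder 𝕜]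
    [IsStrictOrderedRing 𝕜] [Lattice α] {s : Set 𝕜} {f : 𝕜 → 𝕜} (hf : ConvexOn 𝕜 s f)
    {D : α → 𝕜} (hDs : ∀ a, D a ∈ s) (hD : Antitone D)
    (hmod : ∀ a b, D (a ⊔ b) + D (a ⊓ b) = D a + D b) (a b : α) :
    f (D a) + f (D b) ≤ f (D (a ⊔ b)) + f (D (a ⊓ b)) :=
  hf.add_le_add_of_add_eq (hDs _) (hDs _) (hD le_sup_left) (hD le_sup_right) (hmod a b).symm

theorem Finset.union_singleton_sub_le_of_supermodular {β : Type*} [AddCommGroup β] [PartialOrder β]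
    [IsOrderedAddMonoid β] [DecidableEq ι] {g : Finset ι → β}
    (hg : ∀ A B, g A + g B ≤ g (A ∪ B) + g (A ∩ B)) {A B : Finset ι} (hAB : A ⊆ B) {x : ι}
    (hx : x ∉ B) : g (A ∪ {x}) - g A ≤ g (B ∪ {x}) - g B := by
  have hunion : A ∪ {x} ∪ B = B ∪ {x} := by rw [union_right_comm, union_eq_right.2 hAB]
  have hinter : (A ∪ {x}) ∩ B = A := by
    rw [union_inter_distrib_right, inter_eq_left.2 hAB, singleton_inter_of_notMem hx, union_empty]
  rw [sub_le_sub_iff]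
  simpa only [hunion, hinter] using hg (A ∪ {x}) B

theorem Finset.sum_sdiff_union_add_sum_sdiff_inter {M : Type*} [AddCommMonoid M] [DecidableEq ι]
    (s A B : Finset ι) (w : ι → M) :
    ∑ j ∈ s \ (A ∪ B), w j + ∑ j ∈ s \ (A ∩ B), w j = ∑ j ∈ s \ A, w j + ∑ j ∈ s \ B, w j := by
  rw [sdiff_union_distrib, sdiff_inter_distrib_right, add_comm, sum_union_inter]

section

variable [Fintype ι] [DecidableEq ι]

noncomputable def noisePlusInterference (σ2 : ℝ) (w : ι → ℝ) (E : Finset ι) : ℝ :=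
  σ2 + ∑ j ∈ univ \ E, w j

theorem noisePlusInterference_pos {σ2 : ℝ} (hσ : 0 < σ2) {w : ι → ℝ} (hw : ∀ j, 0 ≤ w j)
    (E : Finset ι) : 0 < noisePlusInterference σ2 w E :=
  add_pos_of_pos_of_nonneg hσ (sum_nonneg fun j _ ↦ hw j)

theorem noisePlusInterference_antitone (σ2 : ℝ) {w : ι → ℝ} (hw : ∀ j, 0 ≤ w j) :
    Antitone (noisePlusInterference σ2 w) := fun _ _ hAB ↦
  add_le_add_right (sum_le_sum_of_subset_of_nonneg (sdiff_subset_sdiff le_rfl hAB)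
    fun j _ _ ↦ hw j) _

theorem noisePlusInterference_union_add_inter (σ2 : ℝ) (w : ι → ℝ) (A B : Finset ι) :
    noisePlusInterference σ2 w (A ∪ B) + noisePlusInterference σ2 w (A ∩ B) =
      noisePlusInterference σ2 w A + noisePlusInterference σ2 w B := by
  unfold noisePlusInterference
  linear_combination sum_sdiff_union_add_sum_sdiff_inter univ A B w

end

theorem rho_supermodular [Fintype ι] [DecidableEq ι]
    (c σ2 : ℝ) (hc : 0 < c) (hσ : 0 < σ2) (w : ι → ℝ) (hw : ∀ j, 0 ≤ w j) :
    (∀ A B : Finset ι, A ⊆ B → ∀ x : ι, x ∉ B →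
      rho c σ2 w (A ∪ {x}) - rho c σ2 w A ≤ rho c σ2 w (B ∪ {x}) - rho c σ2 w B) ∧
    (∀ A B : Finset ι,
      rho c σ2 w A + rho c σ2 w B ≤ rho c σ2 w (A ∪ B) + rho c σ2 w (A ∩ B)) := by
  have hconvex : ConvexOn ℝ (Set.Ioi 0) fun t : ℝ ↦ c / t := by
    simpa only [smul_eq_mul, zpow_neg_one, div_eq_mul_inv] using (convexOn_zpow (-1)).smul hc.le
  have hlattice (A B : Finset ι) :
      rho c σ2 w A + rho c σ2 w B ≤ rho c σ2 w (A ∪ B) + rho c σ2 w (A ∩ B) :=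
    hconvex.add_le_add_comp_sup_inf (noisePlusInterference_pos hσ hw)
      (noisePlusInterference_antitone σ2 hw) (noisePlusInterference_union_add_inter σ2 w) A B
  exact ⟨fun A B hAB x hx ↦ union_singleton_sub_le_of_supermodular hlattice hAB hx, hlattice⟩
end

section
/- For every n : ℕ, the number of restricted growth strings of length n equals the number of set partitions of an n-element set: Fintype.card {a : Fin n → ℕ // ∀ i, a i ≤ Finset.sup (Finset.Iio i) (fun j => a j + 1)} = Fintype.card (Finpartition (Finset.univ : Finset (Fin n))). (Here the sup over the empty set is 0, so the condition forces a 0 = 0 and a i ≤ 1 + max_{j < i} a j for i > 0.) -/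
/-- Every restricted growth string satisfies `a i ≤ i`. -/
theorem rgs_le (n : ℕ) (a : Fin n → ℕ)
    (ha : ∀ i, a i ≤ (Finset.Iio i).sup (fun j => a j + 1)) : ∀ i : Fin n, a i ≤ (i : ℕ) := by
  suffices h : ∀ k : ℕ, ∀ i : Fin n, (i : ℕ) = k → a i ≤ (i : ℕ) from fun i => h i i rfl
  intro k
  induction k using Nat.strong_induction_on with
  | _ k ih =>
    intro i hik
    refine le_trans (ha i) (Finset.sup_le fun j hj => ?_)
    have hji : j < i := Finset.mem_Iio.mp hj
    have hji' : (j : ℕ) < (i : ℕ) := hji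
    have := ih (j : ℕ) (by omega) j rfl
    omega

/-- The restricted growth strings of length `n` form a finite type. -/
noncomputable instance rgsFintype (n : ℕ) :
    Fintype {a : Fin n → ℕ // ∀ i, a i ≤ (Finset.Iio i).sup (fun j => a j + 1)} :=
  Fintype.ofInjective
    (fun a i => (⟨a.1 i, lt_of_le_of_lt (rgs_le n a.1 a.2 i) i.isLt⟩ : Fin n))
    (fun _ _ h => Subtype.ext (funext fun i => congrArg Fin.val (congrFun h i)))

/-!
An RGS is determined by which of its entries coincide: an entry either repeats an earlier value
or is a first occurrence, and by the growth condition first occurrences take the values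
`0, 1, 2, …` in order, so each equals the supremum of `a j + 1` over the earlier entries.
Hence `a ↦ (partition into fibres of a)` is injective on RGSs. It is also surjective: number the
parts of a partition `P` by increasing least element. The resulting string is an RGS because the
value of `i` is the number of parts met before the least element of its part, which is at most
the number of distinct values taken before `i`.
-/

open Finset

theorem card_image_le_sup_succ {ι : Type*} (s : Finset ι) (a : ι → ℕ) :
    #(s.image a) ≤ s.sup fun j => a j + 1 := by
  refine (card_le_card fun v hv => ?_).trans (card_range _).le
  obtain ⟨j, hj, rfl⟩ := mem_image.1 hv
  exact mem_range.2 (Nat.lt_of_succ_le (le_sup (f := fun j => a j + 1) hj))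

section RGS

variable {α : Type*} [LinearOrder α] [LocallyFiniteOrderBot α]

def IsRGS (a : α → ℕ) : Prop :=
  ∀ i, a i ≤ (Iio i).sup fun j => a j + 1

namespace IsRGS

variable [WellFoundedLT α] {a b : α → ℕ}

theorem exists_le_eq (ha : IsRGS a) (i : α) : ∀ v ≤ a i, ∃ j ≤ i, a j = v := by
  induction i using WellFoundedLT.induction with
  | _ i ih =>
    intro v hv
    obtain rfl | hlt := hv.eq_or_lt
    · exact ⟨i, le_rfl, rfl⟩
    · obtain ⟨j, hj, hvj⟩ := Finset.lt_sup_iff.1 (hlt.trans_le (ha i))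
      obtain ⟨k, hkj, hk⟩ := ih j (mem_Iio.1 hj) v (Nat.lt_succ_iff.1 hvj)
      exact ⟨k, hkj.trans (mem_Iio.1 hj).le, hk⟩

theorem eq_sup_of_forall_lt_ne (ha : IsRGS a) {i : α} (hi : ∀ j < i, a j ≠ a i) :
    a i = (Iio i).sup fun j => a j + 1 := by
  refine (ha i).antisymm (not_lt.1 fun hlt => ?_)
  obtain ⟨j, hj, hij⟩ := Finset.lt_sup_iff.1 hlt
  obtain ⟨k, hkj, hk⟩ := ha.exists_le_eq j (a i) (Nat.lt_succ_iff.1 hij)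
  exact hi k (hkj.trans_lt (mem_Iio.1 hj)) hk

theorem eq_of_forall_eq_iff (ha : IsRGS a) (hb : IsRGS b)
    (hab : ∀ i j, a i = a j ↔ b i = b j) : a = b := by
  funext i
  induction i using WellFoundedLT.induction with
  | _ i ih =>
    by_cases hrep : ∃ j < i, a j = a i
    · obtain ⟨j, hji, hj⟩ := hrep
      rw [← hj, ih j hji, (hab j i).1 hj]
    · push Not at hrep
      calc a i = (Iio i).sup fun j => a j + 1 := ha.eq_sup_of_forall_lt_ne hrep
        _ = (Iio i).sup fun j => b j + 1 := sup_congr rfl fun j hj => by rw [ih j (mem_Iio.1 hj)]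
        _ = b i := (hb.eq_sup_of_forall_lt_ne fun j hj => (hab j i).not.1 (hrep j hj)).symm

end IsRGS

end RGS

namespace Finpartition

section Ext

variable {α : Type*} [DecidableEq α] {s : Finset α}

theorem parts_eq_image_part (P : Finpartition s) : P.parts = s.image P.part := by
  ext t
  refine ⟨fun ht => ?_, fun ht => ?_⟩
  · obtain ⟨a, ha, rfl⟩ := P.part_surjOn ht
    exact mem_image_of_mem _ ha
  · obtain ⟨a, ha, rfl⟩ := mem_image.1 ht
    exact P.part_mem.2 ha

theorem ext_part {P Q : Finpartition s} (h : ∀ a ∈ s, P.part a = Q.part a) : P = Q :=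
  Finpartition.ext <| by rw [P.parts_eq_image_part, Q.parts_eq_image_part, image_congr h]

end Ext

section Ker

variable {α β : Type*} [Fintype α] [DecidableEq α] {f : α → β} [DecidableRel (Setoid.ker f)]

theorem mem_part_ofSetoid_ker_iff {a b : α} :
    b ∈ (ofSetoid (Setoid.ker f)).part a ↔ f a = f b :=
  mem_part_ofSetoid_iff_rel

theorem ofSetoid_ker_eq_of_eq_iff {P : Finpartition (univ : Finset α)}
    (h : ∀ i j, f i = f j ↔ P.part i = P.part j) : ofSetoid (Setoid.ker f) = P :=
  ext_part fun i _ => by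
    ext j
    rw [mem_part_ofSetoid_ker_iff, h, P.mem_part_iff_part_eq_part (mem_univ j) (mem_univ i),
      eq_comm]

end Ker

variable {α : Type*} [LinearOrder α] [Fintype α] (P : Finpartition (univ : Finset α))

def partMin (i : α) : α :=
  (P.part i).min' (P.part_nonempty.2 (mem_univ i))

theorem partMin_mem (i : α) : P.partMin i ∈ P.part i :=
  min'_mem _ _

theorem partMin_le (i : α) : P.partMin i ≤ i :=
  min'_le _ _ (P.mem_part (mem_univ i))

theorem part_partMin (i : α) : P.part (P.partMin i) = P.part i :=
  P.part_eq_of_mem (P.part_mem.2 (mem_univ i)) (P.partMin_mem i)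

theorem partMin_eq_partMin_iff {i j : α} : P.partMin i = P.partMin j ↔ P.part i = P.part j := by
  refine ⟨fun h => ?_, fun h => ?_⟩
  · rw [← P.part_partMin i, h, P.part_partMin]
  · simp only [partMin, h]

theorem partMin_partMin (i : α) : P.partMin (P.partMin i) = P.partMin i :=
  P.partMin_eq_partMin_iff.2 (P.part_partMin i)

variable [LocallyFiniteOrderBot α]

def countPartsBelow (m : α) : ℕ :=
  #((Iio m).image P.partMin)

theorem strictMonoOn_countPartsBelow :
    StrictMonoOn P.countPartsBelow (Set.range P.partMin) := by
  rintro _ ⟨i, rfl⟩ _ ⟨j, rfl⟩ hij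
  refine card_lt_card ((ssubset_iff_of_subset (image_subset_image (Iio_subset_Iio hij.le))).2
    ⟨P.partMin i, mem_image.2 ⟨P.partMin i, mem_Iio.2 hij, P.partMin_partMin i⟩, fun h => ?_⟩)
  obtain ⟨k, hk, hki⟩ := mem_image.1 h
  exact (hki ▸ P.partMin_le k).not_gt (mem_Iio.1 hk)

def toRGS (i : α) : ℕ :=
  P.countPartsBelow (P.partMin i)

theorem toRGS_eq_toRGS_iff {i j : α} : P.toRGS i = P.toRGS j ↔ P.part i = P.part j := by
  rw [← partMin_eq_partMin_iff]
  exact P.strictMonoOn_countPartsBelow.injOn.eq_iff ⟨i, rfl⟩ ⟨j, rfl⟩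

theorem isRGS_toRGS : IsRGS P.toRGS := by
  intro i
  have hinj : Set.InjOn P.countPartsBelow ((Iio (P.partMin i)).image P.partMin) :=
    P.strictMonoOn_countPartsBelow.injOn.mono (by simp)
  calc P.toRGS i = #(((Iio (P.partMin i)).image P.partMin).image P.countPartsBelow) :=
        (card_image_of_injOn hinj).symm
    _ = #((Iio (P.partMin i)).image P.toRGS) := by rw [image_image]; rfl
    _ ≤ #((Iio i).image P.toRGS) :=
        card_le_card (image_subset_image (Iio_subset_Iio (P.partMin_le i)))
    _ ≤ (Iio i).sup fun j => P.toRGS j + 1 := card_image_le_sup_succ _ _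

end Finpartition

theorem card_rgs_eq_card_finpartition (n : ℕ) :
    Fintype.card {a : Fin n → ℕ // ∀ i, a i ≤ (Finset.Iio i).sup (fun j => a j + 1)} =
      Fintype.card (Finpartition (Finset.univ : Finset (Fin n))) := by
  classical
  refine Fintype.card_of_bijective
    (f := fun a : {a : Fin n → ℕ // IsRGS a} => Finpartition.ofSetoid (Setoid.ker a.1)) ⟨?_, ?_⟩
  · intro a b h
    dsimp only at h
    refine Subtype.ext (IsRGS.eq_of_forall_eq_iff a.2 b.2 fun i j => ?_)
    rw [← Finpartition.mem_part_ofSetoid_ker_iff, h, Finpartition.mem_part_ofSetoid_ker_iff]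
  · exact fun P => ⟨⟨P.toRGS, P.isRGS_toRGS⟩,
      Finpartition.ofSetoid_ker_eq_of_eq_iff fun _ _ => P.toRGS_eq_toRGS_iff⟩
end

section
/- The function x ↦ Real.exp x * ∫ t in Set.Ioi x, Real.exp (−t) / t is strictly decreasing on (0, ∞) (StrictAntiOn on Set.Ioi 0). Equivalently, the long-term average rate ρ ↦ Real.exp (1/ρ) * ∫ t in Set.Ioi (1/ρ), Real.exp (−t) / t is strictly increasing in the SINR ρ on (0, ∞). -/
/-!
Substituting t = s + x gives e^x ∫_x^∞ e^{-t}/t dt = ∫_0^∞ e^{-s}/(s + x) ds, whose integrand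
strictly decreases in x for every s > 0, so the integral does too. The rate is this function
composed with the strictly decreasing map ρ ↦ 1/ρ.
-/

open MeasureTheory Set

theorem setIntegral_Ioi_eq_setIntegral_Ioi_zero_comp_add {E : Type*} [NormedAddCommGroup E]
    [NormedSpace ℝ E] (f : ℝ → E) (a : ℝ) :
    ∫ t in Ioi a, f t = ∫ s in Ioi 0, f (s + a) := by
  rw [← (measurePreserving_add_right volume a).setIntegral_preimage_emb
    (measurableEmbedding_addRight a), preimage_add_const_Ioi, sub_self]

theorem setIntegral_lt_setIntegral_of_forall_lt {X : Type*} [MeasurableSpace X] {μ : Measure X}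
    {s : Set X} {f g : X → ℝ} (hs : MeasurableSet s) (hμs : μ s ≠ 0)
    (hf : IntegrableOn f s μ) (hg : IntegrableOn g s μ) (hlt : ∀ x ∈ s, f x < g x) :
    ∫ x in s, f x ∂μ < ∫ x in s, g x ∂μ := by
  rw [← sub_pos, ← integral_sub hg hf]
  have hpos : ∀ x ∈ s, 0 < (g - f) x := fun x hx => sub_pos.2 (hlt x hx)
  refine (setIntegral_pos_iff_support_of_nonneg_ae ?_ (hg.sub hf)).2 ?_
  · exact (ae_restrict_mem hs).mono fun x hx => (hpos x hx).le
  · rwa [inter_eq_right.2 fun x hx => Function.mem_support.2 (hpos x hx).ne', pos_iff_ne_zero]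

theorem integrableOn_exp_neg_div_add {x : ℝ} (hx : 0 < x) :
    IntegrableOn (fun s => Real.exp (-s) / (s + x)) (Ioi 0) := by
  refine ((exp_neg_integrableOn_Ioi 0 one_pos).div_const x).mono'
    (ContinuousOn.aestronglyMeasurable ?_ measurableSet_Ioi) ?_
  · exact ContinuousOn.div (by fun_prop) (by fun_prop) fun s (hs : 0 < s) => by positivity
  · refine (ae_restrict_mem measurableSet_Ioi).mono fun s (hs : 0 < s) => ?_
    rw [Real.norm_of_nonneg (by positivity), neg_one_mul]
    gcongr
    linarith

theorem exp_mul_setIntegral_Ioi_exp_neg_div (x : ℝ) :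
    Real.exp x * ∫ t in Ioi x, Real.exp (-t) / t = ∫ s in Ioi 0, Real.exp (-s) / (s + x) := by
  rw [setIntegral_Ioi_eq_setIntegral_Ioi_zero_comp_add, ← integral_const_mul]
  refine setIntegral_congr_fun measurableSet_Ioi fun s _ => ?_
  rw [mul_div_assoc', ← Real.exp_add]
  congr 2
  ring

theorem strictAntiOn_exp_mul_setIntegral_Ioi_exp_neg_div :
    StrictAntiOn (fun x => Real.exp x * ∫ t in Ioi x, Real.exp (-t) / t) (Ioi 0) := by
  intro x (hx : 0 < x) y (hy : 0 < y) hxy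
  simp only [exp_mul_setIntegral_Ioi_exp_neg_div]
  refine setIntegral_lt_setIntegral_of_forall_lt measurableSet_Ioi (by simp)
    (integrableOn_exp_neg_div_add hy) (integrableOn_exp_neg_div_add hx) fun s (hs : 0 < s) => ?_
  gcongr

theorem expE1_strictAnti_and_rate_strictMono :
    StrictAntiOn (fun x : ℝ => Real.exp x * ∫ t in Set.Ioi x, Real.exp (-t) / t)
      (Set.Ioi (0 : ℝ)) ∧
    StrictMonoOn (fun ρ : ℝ => Real.exp (1 / ρ) * ∫ t in Set.Ioi (1 / ρ), Real.exp (-t) / t)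
      (Set.Ioi (0 : ℝ)) := by
  refine ⟨strictAntiOn_exp_mul_setIntegral_Ioi_exp_neg_div, ?_⟩
  simp only [one_div]
  exact strictAntiOn_exp_mul_setIntegral_Ioi_exp_neg_div.comp strictAntiOn_inv_pos
    fun ρ hρ => mem_Ioi.2 (inv_pos.2 hρ)
end
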